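/- With the distorted measures Pₖ as in the distortion method with parameter δ ∈ (0, 1/2], and with αₖ(x) the fraction of the fibre over x ∈ Q_{k-1} covered by Bₖ, one has Pₖ(Bₖ) = (1/(1−δ)) · ∑_{x ∈ Q_{k-1}} max{0, αₖ(x) − δ} · P_{k-1}(x), and consequently Pₖ(Bₖ) ≤ E_{k-1}[αₖ(x)²] / (4δ(1−δ)), where E_{k-1} denotes expectation with respect to P_{k-1} on Q_{k-1}. -/

import Mathlib

open Finset

attribute [local instance] Classical.propDecidable

/-- A hyperplane in a product `∀ i, S i`: each coordinate factor is either
the full set or a singleton. -/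
structure Hyperplane {ι : Type*} (S : ι → Type*) where
  Y : ∀ i, Set (S i)
  full_or_singleton : ∀ i, Y i = Set.univ ∨ ∃ a, Y i = {a}

namespace Hyperplane

variable {ι : Type*} {S : ι → Type*}

/-- The set of points of the hyperplane. -/
def toSet (A : Hyperplane S) : Set (∀ i, S i) := {x | ∀ i, x i ∈ A.Y i}

/-- The set of fixed coordinates. -/
def fixedSet (A : Hyperplane S) : Set ι := {i | A.Y i ≠ Set.univ}

/-- The fixed coordinates as a `Finset`. -/
noncomputable def fixedFinset [Fintype ι] (A : Hyperplane S) : Finset ι :=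
  Finset.univ.filter fun i => A.Y i ≠ Set.univ

end Hyperplane

section Distortion

variable {n : ℕ} {S : Fin n → Type*}

/-- The proportion of the fibre through `x` in direction `k` covered by `B`. -/
noncomputable def alpha [∀ i, Fintype (S i)] (B : Set (∀ i, S i)) (k : Fin n)
    (x : ∀ i, S i) : ℝ :=
  (Finset.univ.filter fun y : S k => Function.update x k y ∈ B).card / Fintype.card (S k)

/-- The distorted point masses `P_k` of the distortion method, as densities on the
full product: `P 0` is uniform, and `P (k+1)` reweights `P k` on each fibre in
direction `k` according to the covered set `B k`. -/
noncomputable def distP [∀ i, Fintype (S i)] (B : Fin n → Set (∀ i, S i)) (δ : ℝ) :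
    ℕ → (∀ i, S i) → ℝ
  | 0, _ => 1 / Fintype.card (∀ i, S i)
  | (k + 1), x =>
    (if h : k < n then
      (if x ∈ B ⟨k, h⟩ then
        max 0 ((alpha (B ⟨k, h⟩) ⟨k, h⟩ x - δ) / (alpha (B ⟨k, h⟩) ⟨k, h⟩ x * (1 - δ)))
      else
        min (1 / (1 - alpha (B ⟨k, h⟩) ⟨k, h⟩ x)) (1 / (1 - δ)))
     else 1) * distP B δ k x

/-- The `P_k`-measure of a subset of the product. -/
noncomputable def distPMeas [∀ i, Fintype (S i)] (B : Fin n → Set (∀ i, S i)) (δ : ℝ)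
    (k : ℕ) (X : Set (∀ i, S i)) : ℝ :=
  ∑ z : ∀ i, S i, if z ∈ X then distP B δ k z else 0

/-- `X` depends only on the coordinates `i` with `i < m`. -/
def DistDependsOn (X : Set (∀ i, S i)) (m : ℕ) : Prop :=
  ∀ x y : ∀ i, S i, (∀ i : Fin n, (i : ℕ) < m → x i = y i) → x ∈ X → y ∈ X

/-- `B_k`: the union of the hyperplanes of `𝒜` whose largest fixed coordinate is `k`. -/
noncomputable def coverSet [∀ i, Fintype (S i)] (𝒜 : Finset (Hyperplane S)) (k : Fin n) :
    Set (∀ i, S i) :=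
  {x | ∃ A ∈ 𝒜, A.fixedFinset.max = (k : WithBot (Fin n)) ∧ x ∈ A.toSet}

/-- `A^{[m]}`: the hyperplane obtained from `A` by replacing the factors with
index `≥ m` by the full sets. -/
def projSet (A : Hyperplane S) (m : ℕ) : Set (∀ i, S i) :=
  {x | ∀ i : Fin n, (i : ℕ) < m → x i ∈ A.Y i}

end Distortion


section AuxDistort

variable {n : ℕ} {S : Fin n → Type*} [∀ i, Fintype (S i)]

lemma alpha_nonneg (B : Set (∀ i, S i)) (k : Fin n) (x : ∀ i, S i) :
    0 ≤ alpha B k x := by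
  unfold alpha; positivity

lemma alpha_le_one (B : Set (∀ i, S i)) (k : Fin n) (x : ∀ i, S i) :
    alpha B k x ≤ 1 := by
  unfold alpha
  rcases Nat.eq_zero_or_pos (Fintype.card (S k)) with h | h
  · simp [h]
  · rw [div_le_one (by exact_mod_cast h)]
    have h2 : (Finset.univ.filter fun y : S k => Function.update x k y ∈ B).card
        ≤ Fintype.card (S k) :=
      (Finset.card_filter_le _ _).trans (le_of_eq Finset.card_univ)
    exact_mod_cast h2

lemma alpha_pos_of_mem (B : Set (∀ i, S i)) (k : Fin n) (x : ∀ i, S i)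
    (hx : x ∈ B) : 0 < alpha B k x := by
  have hc : 0 < Fintype.card (S k) := Fintype.card_pos_iff.mpr ⟨x k⟩
  have hmem : x k ∈ Finset.univ.filter fun y : S k => Function.update x k y ∈ B := by
    simp [Function.update_eq_self, hx]
  have hcard : 0 < (Finset.univ.filter fun y : S k => Function.update x k y ∈ B).card :=
    Finset.card_pos.mpr ⟨_, hmem⟩
  unfold alpha
  positivity

lemma alpha_update (B : Set (∀ i, S i)) (k : Fin n) (x : ∀ i, S i) (y : S k) :
    alpha B k (Function.update x k y) = alpha B k x := by
  unfold alpha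
  have h : (Finset.univ.filter fun y' : S k =>
        Function.update (Function.update x k y) k y' ∈ B)
      = Finset.univ.filter fun y' : S k => Function.update x k y' ∈ B := by
    apply Finset.filter_congr
    intro y' _
    rw [Function.update_idem]
  rw [h]

lemma distP_nonneg (B : Fin n → Set (∀ i, S i)) {δ : ℝ} (hδ1 : δ ≤ 1 / 2)
    (m : ℕ) (x : ∀ i, S i) : 0 ≤ distP B δ m x := by
  induction m with
  | zero => unfold distP; positivity
  | succ m ih =>
    rw [distP]
    refine mul_nonneg ?_ ih
    split
    · split
      · exact le_max_left _ _
      · refine le_min (one_div_nonneg.mpr ?_) (one_div_nonneg.mpr (by linarith))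
        have := alpha_le_one (B ⟨m, ‹_›⟩) ⟨m, ‹_›⟩ x
        linarith
    · norm_num

lemma mem_update_iff {X : Set (∀ j, S j)} {m : ℕ} (hX : DistDependsOn X m)
    {i : Fin n} (hi : m ≤ (i : ℕ)) (z : ∀ j, S j) (y : S i) :
    Function.update z i y ∈ X ↔ z ∈ X := by
  have hup : ∀ j : Fin n, (j : ℕ) < m → Function.update z i y j = z j := fun j hj => by
    have hji : j ≠ i := by rintro rfl; omega
    exact Function.update_of_ne hji _ _
  exact ⟨fun h => hX _ _ hup h, fun h => hX _ _ (fun j hj => (hup j hj).symm) h⟩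

lemma alpha_update_ne {X : Set (∀ j, S j)} {m : ℕ} (hX : DistDependsOn X m)
    {k i : Fin n} (hk : (k : ℕ) < m) (hi : m ≤ (i : ℕ)) (z : ∀ j, S j) (y : S i) :
    alpha X k (Function.update z i y) = alpha X k z := by
  have hki : i ≠ k := by rintro rfl; omega
  unfold alpha
  have h : (Finset.univ.filter fun y' : S k =>
        Function.update (Function.update z i y) k y' ∈ X)
      = Finset.univ.filter fun y' : S k => Function.update z k y' ∈ X := by
    apply Finset.filter_congr
    intro y' _
    rw [Function.update_comm hki y y' z]
    exact mem_update_iff hX hi _ _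
  rw [h]

lemma distP_update (B : Fin n → Set (∀ j, S j)) (δ : ℝ)
    (hB : ∀ k : Fin n, DistDependsOn (B k) ((k : ℕ) + 1)) (i : Fin n) (m : ℕ)
    (hm : m ≤ (i : ℕ)) (z : ∀ j, S j) (y : S i) :
    distP B δ m (Function.update z i y) = distP B δ m z := by
  induction m with
  | zero => rfl
  | succ m ih =>
    have hmlt : m < (i : ℕ) := hm
    have hmn : m < n := hmlt.trans i.isLt
    rw [distP, distP, dif_pos hmn, dif_pos hmn, ih hmlt.le]
    congr 1
    have hBm := hB ⟨m, hmn⟩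
    have hmi : m + 1 ≤ (i : ℕ) := hm
    rw [mem_update_iff hBm hmi z y, alpha_update_ne hBm (by simp) hmi z y]

/-- The fibre-collapsing identity: if `f` is invariant under changing coordinate `i`,
then the `B`-indicator sum of `f` equals the `alpha`-weighted sum. -/
lemma sum_indicator_eq_sum_alpha (B : Set (∀ j, S j)) (i : Fin n)
    (hc : 0 < Fintype.card (S i))
    (f : (∀ j, S j) → ℝ) (hf : ∀ z y, f (Function.update z i y) = f z) :
    ∑ z : ∀ j, S j, (if z ∈ B then f z else 0) = ∑ z : ∀ j, S j, alpha B i z * f z := by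
  classical
  have hc : (0 : ℝ) < Fintype.card (S i) := by exact_mod_cast hc
  set g : (∀ j, S j) → ℝ := fun w => if w ∈ B then f w else 0 with hg
  set e : ((∀ j, S j) × S i) → ((∀ j, S j) × S i) :=
    fun p => (Function.update p.1 i p.2, p.1 i) with he
  have hinv : Function.Involutive e := by
    intro p
    simp only [he]
    refine Prod.ext ?_ (by simp)
    funext j
    by_cases hji : j = i
    · subst hji; simp
    · simp [Function.update_of_ne hji]
  have key : ∑ p : (∀ j, S j) × S i, g ((e p).1) = ∑ p : (∀ j, S j) × S i, g p.1 :=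
    Function.Bijective.sum_comp hinv.bijective fun p => g p.1
  have lhs1 : ∑ p : (∀ j, S j) × S i, g p.1 = (Fintype.card (S i) : ℝ) * ∑ z, g z := by
    rw [Fintype.sum_prod_type]
    simp only [Finset.sum_const, Finset.card_univ, nsmul_eq_mul]
    rw [← Finset.mul_sum]
  have lhs2 : ∑ p : (∀ j, S j) × S i, g ((e p).1)
      = (Fintype.card (S i) : ℝ) * ∑ z, alpha B i z * f z := by
    rw [Fintype.sum_prod_type]
    have hz : ∀ z : ∀ j, S j, (∑ y : S i, g (Function.update z i y))
        = (Fintype.card (S i) : ℝ) * (alpha B i z * f z) := by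
      intro z
      have hgy : ∀ y : S i, g (Function.update z i y)
          = if Function.update z i y ∈ B then f z else 0 := fun y => by
        simp only [hg, hf]
      simp only [hgy]
      rw [Finset.sum_ite, Finset.sum_const, Finset.sum_const_zero, add_zero, nsmul_eq_mul]
      unfold alpha
      have hc' : (Fintype.card (S i) : ℝ) ≠ 0 := ne_of_gt hc
      field_simp
    simp only [he]
    rw [Finset.sum_congr rfl fun z _ => hz z, ← Finset.mul_sum]
  rw [lhs1, lhs2] at key
  exact (mul_left_cancel₀ (ne_of_gt hc) key).symm

end AuxDistort


/-- `P_k(B_k) = (1/(1-δ)) ∑_x max{0, α_k(x) - δ} P_{k-1}(x)`, and consequently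
`P_k(B_k) ≤ E_{k-1}[α_k(x)²] / (4δ(1-δ))`. -/
theorem distPMeas_coverSet {n : ℕ} {S : Fin n → Type*} [∀ i, Fintype (S i)]
    (hS : ∀ i, 2 ≤ Fintype.card (S i)) (δ : ℝ) (hδ0 : 0 < δ) (hδ1 : δ ≤ 1 / 2)
    (B : Fin n → Set (∀ i, S i)) (hB : ∀ k : Fin n, DistDependsOn (B k) ((k : ℕ) + 1))
    (i : Fin n) :
    distPMeas B δ ((i : ℕ) + 1) (B i)
        = (1 / (1 - δ)) *
          ∑ z : ∀ j, S j, max 0 (alpha (B i) i z - δ) * distP B δ (i : ℕ) z ∧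
    distPMeas B δ ((i : ℕ) + 1) (B i)
        ≤ (∑ z : ∀ j, S j, (alpha (B i) i z) ^ 2 * distP B δ (i : ℕ) z)
            / (4 * δ * (1 - δ)) := by
  classical
  have hn : (i : ℕ) < n := i.isLt
  have h1δ : 0 < 1 - δ := by linarith
  have hP0 : ∀ z, 0 ≤ distP B δ (i : ℕ) z := distP_nonneg B hδ1 _
  -- the invariant density used in the fibre-collapsing identity
  set f : (∀ j, S j) → ℝ := fun z =>
    max 0 (alpha (B i) i z - δ) / (alpha (B i) i z * (1 - δ)) * distP B δ (i : ℕ) z with hf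
  have hfinv : ∀ z y, f (Function.update z i y) = f z := by
    intro z y
    simp only [hf, alpha_update, distP_update B δ hB i (i : ℕ) le_rfl z y]
  have hIeta : (⟨(i : ℕ), hn⟩ : Fin n) = i := by ext; rfl
  -- step 1: the measure of `B i` is the indicator sum of `f`
  have step1 : distPMeas B δ ((i : ℕ) + 1) (B i)
      = ∑ z : ∀ j, S j, (if z ∈ B i then f z else 0) := by
    unfold distPMeas
    refine Finset.sum_congr rfl fun z _ => ?_
    by_cases hz : z ∈ B i
    · rw [if_pos hz, if_pos hz, distP, dif_pos hn, hIeta, if_pos hz, hf]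
      have hα : 0 < alpha (B i) i z := alpha_pos_of_mem _ _ _ hz
      have hden : 0 < alpha (B i) i z * (1 - δ) := by positivity
      congr 1
      rcases le_or_gt (alpha (B i) i z - δ) 0 with hc | hc
      · rw [max_eq_left (div_nonpos_of_nonpos_of_nonneg hc hden.le),
          max_eq_left hc, zero_div]
      · rw [max_eq_right (le_of_lt (div_pos hc hden)), max_eq_right hc.le]
    · rw [if_neg hz, if_neg hz]
  -- step 2: fibre collapsing
  have step2 : distPMeas B δ ((i : ℕ) + 1) (B i)
      = ∑ z : ∀ j, S j, alpha (B i) i z * f z := by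
    rw [step1]
    exact sum_indicator_eq_sum_alpha (B i) i (by have := hS i; omega) f hfinv
  have key : distPMeas B δ ((i : ℕ) + 1) (B i)
      = (1 / (1 - δ)) *
        ∑ z : ∀ j, S j, max 0 (alpha (B i) i z - δ) * distP B δ (i : ℕ) z := by
    rw [step2, Finset.mul_sum]
    refine Finset.sum_congr rfl fun z _ => ?_
    simp only [hf]
    have h1δ' : (1 : ℝ) - δ ≠ 0 := ne_of_gt h1δ
    rcases eq_or_lt_of_le (alpha_nonneg (B i) i z) with hα | hα
    · rw [← hα]
      have h0 : max 0 ((0 : ℝ) - δ) = 0 := max_eq_left (by linarith)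
      rw [h0]
      ring
    · have hα' : alpha (B i) i z ≠ 0 := ne_of_gt hα
      field_simp
  refine ⟨key, ?_⟩
  rw [key]
  have hterm : ∀ z : ∀ j, S j,
      max 0 (alpha (B i) i z - δ) * distP B δ (i : ℕ) z
        ≤ (alpha (B i) i z) ^ 2 / (4 * δ) * distP B δ (i : ℕ) z := by
    intro z
    refine mul_le_mul_of_nonneg_right ?_ (hP0 z)
    have hα0 := alpha_nonneg (B i) i z
    rcases le_or_gt (alpha (B i) i z - δ) 0 with hc | hc
    · rw [max_eq_left hc]; positivity
    · rw [max_eq_right hc.le, le_div_iff₀ (by positivity : (0 : ℝ) < 4 * δ)]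
      nlinarith [sq_nonneg (alpha (B i) i z - 2 * δ)]
  calc (1 / (1 - δ)) *
        ∑ z : ∀ j, S j, max 0 (alpha (B i) i z - δ) * distP B δ (i : ℕ) z
      ≤ (1 / (1 - δ)) *
        ∑ z : ∀ j, S j, (alpha (B i) i z) ^ 2 / (4 * δ) * distP B δ (i : ℕ) z := by
        refine mul_le_mul_of_nonneg_left (Finset.sum_le_sum fun z _ => hterm z) (by positivity)
    _ = (∑ z : ∀ j, S j, (alpha (B i) i z) ^ 2 * distP B δ (i : ℕ) z)
          / (4 * δ * (1 - δ)) := by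
        rw [Finset.mul_sum, Finset.sum_div]
        refine Finset.sum_congr rfl fun z _ => ?_
        have h4 : (4 : ℝ) * δ * (1 - δ) ≠ 0 := ne_of_gt (by positivity)
        rw [eq_div_iff h4]
        field_simp
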